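/- arXiv:2201.09714 — 9 statements merged into one kernel-verified Lean document; each statement's English description precedes it below -/
import Mathlib

section
/- Let V and K be closed subspaces of a Hilbert space H and let {e_i}_{i∈I} be an orthonormal basis of V. Then {P_K e_i : i ∈ I} is a Parseval frame for K if and only if K ⊆ V. -/
/-!
For `k ∈ K` the projection `P_K` can be moved across the inner product, so
`⟪k, P_K e_i⟫ = ⟪k, e_i⟫`, and Parseval's identity in `V` turns the frame sum into `‖P_V k‖²`.
Since `‖P_V k‖ = ‖k‖` exactly when `k ∈ V`, the frame identity on `K` says `K ⊆ V`.
-/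

open Submodule

section
variable {𝕜 E ι : Type*} [RCLike 𝕜] [NormedAddCommGroup E] [InnerProductSpace 𝕜 E]

theorem HilbertBasis.norm_sq_eq_tsum_norm_inner_sq (B : HilbertBasis ι 𝕜 E) (x : E) :
    ‖x‖ ^ 2 = ∑' i, ‖(inner 𝕜 (B i) x : 𝕜)‖ ^ 2 := by
  have h := lp.norm_rpow_eq_tsum (p := 2) (by norm_num) (B.repr x)
  simp only [ENNReal.toReal_ofNat, Real.rpow_two, LinearIsometryEquiv.norm_map,
    B.repr_apply_apply] at h
  exact h

theorem Submodule.topologicalClosure_span_range_codRestrict_eq_top {b : ι → E} {U : Submodule 𝕜 E}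
    (hbU : ∀ i, b i ∈ U) (hU : U = (span 𝕜 (Set.range b)).topologicalClosure) :
    (span 𝕜 (Set.range (Set.codRestrict b U hbU))).topologicalClosure = ⊤ := by
  refine eq_top_iff.mpr fun w _ ↦ ?_
  have himage : ((↑) : U → E) '' span 𝕜 (Set.range (Set.codRestrict b U hbU)) =
      span 𝕜 (Set.range b) := by
    rw [← U.coe_subtype, ← map_coe, map_span, ← Set.range_comp]
    rfl
  rw [← SetLike.mem_coe, topologicalClosure_coe,
    Topology.IsInducing.subtypeVal.closure_eq_preimage_closure_image]
  change (w : E) ∈ closure (((↑) : U → E) '' _)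
  rw [himage, ← topologicalClosure_coe, ← hU]
  exact w.2

theorem Orthonormal.tsum_norm_inner_sq_eq_norm_starProjection_sq {b : ι → E}
    (hb : Orthonormal 𝕜 b) {U : Submodule 𝕜 E} [CompleteSpace U]
    (hU : U = (span 𝕜 (Set.range b)).topologicalClosure) (x : E) :
    ∑' i, ‖(inner 𝕜 (b i) x : 𝕜)‖ ^ 2 = ‖U.starProjection x‖ ^ 2 := by
  have hbU : ∀ i, b i ∈ U := fun i ↦
    hU ▸ le_topologicalClosure _ (subset_span (Set.mem_range_self i))
  let B : HilbertBasis ι 𝕜 U := HilbertBasis.mk (hb.codRestrict U hbU)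
    (topologicalClosure_span_range_codRestrict_eq_top hbU hU).ge
  have hB : ∀ i, (B i : E) = b i := fun i ↦ by simp [B]
  rw [starProjection_apply, Submodule.norm_coe, B.norm_sq_eq_tsum_norm_inner_sq]
  simp only [← hB, inner_orthogonalProjectionOnto_eq_of_mem_left]

end

theorem stmt2_general {H : Type*} [NormedAddCommGroup H] [InnerProductSpace ℂ H]
    (V K : Submodule ℂ H) [CompleteSpace V] [CompleteSpace K]
    {I : Type*} (b : I → H) (hb : Orthonormal ℂ b)
    (hspan : V = (Submodule.span ℂ (Set.range b)).topologicalClosure) :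
    (∀ k ∈ K, ‖k‖ ^ 2 = ∑' i : I, ‖(inner ℂ k ((K.orthogonalProjection (b i) : H)) : ℂ)‖ ^ 2)
      ↔ K ≤ V := by
  have frame_sum : ∀ k ∈ K,
      ∑' i : I, ‖(inner ℂ k ((K.orthogonalProjection (b i) : H)) : ℂ)‖ ^ 2 =
        ‖V.starProjection k‖ ^ 2 := by
    intro k hk
    simp only [← hb.tsum_norm_inner_sq_eq_norm_starProjection_sq hspan k]
    congr! 2 with i
    rw [← coe_mk k hk, ← coe_inner, inner_orthogonalProjectionOnto_eq_of_mem_left,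
      norm_inner_symm]
  simp +contextual only [frame_sum, SetLike.le_def, V.mem_iff_norm_starProjection,
    sq_eq_sq₀ (norm_nonneg _) (norm_nonneg _), eq_comm]

/-- Let `V` and `K` be closed (complete) subspaces of a Hilbert space `H` and let
`(b i)_{i ∈ I}` be an orthonormal basis of `V`. Then `{P_K (b i) : i ∈ I}` is a Parseval
frame for `K` if and only if `K ⊆ V`. -/
theorem stmt2 {H : Type*} [NormedAddCommGroup H] [InnerProductSpace ℂ H] [CompleteSpace H]
    (V K : Submodule ℂ H) [CompleteSpace V] [CompleteSpace K]
    {I : Type*} (b : I → H) (hb : Orthonormal ℂ b) (hbV : ∀ i, b i ∈ V)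
    (hspan : V = (Submodule.span ℂ (Set.range b)).topologicalClosure) :
    (∀ k ∈ K, ‖k‖ ^ 2 = ∑' i : I, ‖(inner ℂ k ((K.orthogonalProjection (b i) : H)) : ℂ)‖ ^ 2)
      ↔ K ≤ V :=
  stmt2_general V K b hb hspan
end

section
/- Let (S_i)_{i=0}^{N-1} satisfy the Cuntz relations on a Hilbert space H, and suppose v₀ is a unit vector with S_{i_{p-1}}*⋯S_{i_0}* v₀ = v₀. Then for every 0 ≤ k ≤ p-1 and every word ω of length k+1 with ω ≠ i₀…i_k, we have S_ω* v₀ = 0. -/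
/-!
Since `∑ Sᵢ Sᵢ* = 1`, every vector satisfies `∑ ‖Sᵢ* v‖² = ‖v‖²`, so each `Sᵢ*` is a contraction
and applying a word can only shrink norms. The periodic word returns `v₀` to itself, hence no
norm is lost along its prefixes: at each step the whole of `‖v‖²` sits in the one term
`‖S_{i_k}* v‖²`, and every other letter kills the current vector.
-/

open ContinuousLinearMap

theorem sum_norm_adjoint_apply_sq {𝕜 E ι : Type*} [RCLike 𝕜] [NormedAddCommGroup E]
    [InnerProductSpace 𝕜 E] [CompleteSpace E] [Fintype ι] (S : ι → E →L[𝕜] E)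
    (hsum : ∑ i, (S i).comp (adjoint (S i)) = 1) (v : E) :
    ∑ i, ‖adjoint (S i) v‖ ^ 2 = ‖v‖ ^ 2 := by
  simp only [apply_norm_sq_eq_inner_adjoint_left, adjoint_adjoint]
  rw [← map_sum, ← sum_inner, ← sum_apply, hsum, one_apply_eq_self,
    ← inner_self_eq_norm_sq (𝕜 := 𝕜)]

section SquareSummable

variable {ι E : Type*} [Fintype ι] [NormedAddCommGroup E]
  {T : ι → E → E} (hT : ∀ v, ∑ i, ‖T i v‖ ^ 2 = ‖v‖ ^ 2)
include hT

theorem norm_apply_le_of_sum_norm_sq (j : ι) (v : E) : ‖T j v‖ ≤ ‖v‖ := by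
  have hsq : ‖T j v‖ ^ 2 ≤ ‖v‖ ^ 2 :=
    hT v ▸ Finset.single_le_sum (fun i _ => sq_nonneg ‖T i v‖) (Finset.mem_univ j)
  exact (pow_le_pow_iff_left₀ (norm_nonneg _) (norm_nonneg _) two_ne_zero).mp hsq

theorem apply_eq_zero_of_norm_apply_eq {i j : ι} (hij : i ≠ j) {v : E}
    (hj : ‖T j v‖ = ‖v‖) : T i v = 0 := by
  classical
  have hpair : ‖T i v‖ ^ 2 + ‖T j v‖ ^ 2 ≤ ‖v‖ ^ 2 := by
    rw [← Finset.sum_pair (f := fun k => ‖T k v‖ ^ 2) hij, ← hT v]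
    exact Finset.sum_le_sum_of_subset_of_nonneg (Finset.subset_univ _)
      fun k _ _ => sq_nonneg ‖T k v‖
  rw [hj] at hpair
  exact norm_eq_zero.mp (pow_eq_zero_iff two_ne_zero |>.mp
    (le_antisymm (by linarith) (sq_nonneg _)))

theorem apply_zero_of_sum_norm_sq (j : ι) : T j 0 = 0 :=
  norm_le_zero_iff.mp (norm_zero (E := E) ▸ norm_apply_le_of_sum_norm_sq hT j 0)

theorem foldl_zero_of_sum_norm_sq (ω : List ι) : ω.foldl (fun v j => T j v) 0 = 0 := by
  induction ω with
  | nil => rfl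
  | cons j ω ih => rw [List.foldl_cons, apply_zero_of_sum_norm_sq hT, ih]

theorem norm_foldl_le_of_sum_norm_sq (ω : List ι) (v : E) :
    ‖ω.foldl (fun v j => T j v) v‖ ≤ ‖v‖ := by
  induction ω generalizing v with
  | nil => rfl
  | cons j ω ih => exact (ih (T j v)).trans (norm_apply_le_of_sum_norm_sq hT j v)

/-- If applying the word `u` does not decrease `‖v‖`, then every word of length at most that of `u`
which is not a prefix of `u` annihilates `v`. -/
theorem foldl_eq_zero_of_norm_foldl_eq {u : List ι} {v : E}
    (hu : ‖u.foldl (fun v j => T j v) v‖ = ‖v‖) {ω : List ι} (hlen : ω.length ≤ u.length)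
    (hne : ω ≠ u.take ω.length) : ω.foldl (fun v j => T j v) v = 0 := by
  induction u generalizing v ω with
  | nil => simp_all
  | cons a u ih =>
    obtain _ | ⟨b, ω⟩ := ω
    · simp at hne
    have hle := norm_foldl_le_of_sum_norm_sq hT u (T a v)
    have ha := norm_apply_le_of_sum_norm_sq hT a v
    rw [List.foldl_cons] at hu ⊢
    by_cases hba : b = a
    · subst hba
      exact ih (by linarith) (by simpa using hlen) (by simpa using hne)
    · rw [apply_eq_zero_of_norm_apply_eq hT hba (by linarith), foldl_zero_of_sum_norm_sq hT]

end SquareSummable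

theorem stmt5_general {H : Type*} [NormedAddCommGroup H] [InnerProductSpace ℂ H] [CompleteSpace H]
    {N p : ℕ} (hp : 1 ≤ p) (S : Fin N → H →L[ℂ] H)
    (hsum : ∑ i, (S i).comp (ContinuousLinearMap.adjoint (S i)) = 1)
    (v₀ : H) (idx : Fin p → Fin N)
    (hper : (List.ofFn idx).foldl (fun v j => ContinuousLinearMap.adjoint (S j) v) v₀ = v₀) :
    ∀ k, k ≤ p - 1 → ∀ ω : List (Fin N), ω.length = k + 1 →
      ω ≠ (List.ofFn idx).take (k + 1) →
      ω.foldl (fun v j => ContinuousLinearMap.adjoint (S j) v) v₀ = 0 := by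
  intro k hk ω hω hne
  refine foldl_eq_zero_of_norm_foldl_eq (sum_norm_adjoint_apply_sq S hsum) (congrArg norm hper)
    ?_ (hω ▸ hne)
  rw [hω, List.length_ofFn]
  omega

/-- Let `(Sᵢ)` satisfy the Cuntz relations and suppose `v₀` is a unit vector with
`S_{i_{p-1}}*⋯S_{i_0}* v₀ = v₀`. Then for every `0 ≤ k ≤ p-1` and every word `ω` of
length `k+1` with `ω ≠ i₀…i_k`, we have `S_ω* v₀ = 0`. -/
theorem stmt5 {H : Type*} [NormedAddCommGroup H] [InnerProductSpace ℂ H] [CompleteSpace H]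
    {N p : ℕ} (hp : 1 ≤ p) (S : Fin N → H →L[ℂ] H)
    (horth : ∀ i j, (ContinuousLinearMap.adjoint (S j)).comp (S i) =
      if i = j then 1 else 0)
    (hsum : ∑ i, (S i).comp (ContinuousLinearMap.adjoint (S i)) = 1)
    (v₀ : H) (hv : ‖v₀‖ = 1) (idx : Fin p → Fin N)
    (hper : (List.ofFn idx).foldl (fun v j => ContinuousLinearMap.adjoint (S j) v) v₀ = v₀) :
    ∀ k, k ≤ p - 1 → ∀ ω : List (Fin N), ω.length = k + 1 →
      ω ≠ (List.ofFn idx).take (k + 1) →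
      ω.foldl (fun v j => ContinuousLinearMap.adjoint (S j) v) v₀ = 0 :=
  stmt5_general hp S hsum v₀ idx hper
end

section
/- Let (K, (V_i)_{i=0}^{N-1}) be a row co-isometry acting on a finite-dimensional subspace K₀ with orthonormal basis (e_c)_{c∈M} as a random walk (M, {g_i}, {ν_i}): V_i* e_c = ν_i(c) e_{g_i(c)}. If the random walk is irreducible and separating, then any operator T : K₀ → K₀ satisfying P_{K₀}(Σ_{i=0}^{N-1} V_i T V_i*) P_{K₀} = T is a scalar multiple of the identity on K₀. -/
/-!
The matrix `t c d = ⟪e c, T (e d)⟫` of a fixed point `T` is a fixed point of the transfer map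
`t ↦ (c, d) ↦ ∑ᵢ conj (νᵢ c) νᵢ d t (gᵢ c) (gᵢ d)` of the random walk. Iterating it `n` times
writes `t c d` as a sum over words of length `n` of `conj (ν_ω c) ν_ω d t (g_ω c) (g_ω d)`,
which vanishes for `c ≠ d` once `n` exceeds the separation length. On the diagonal the transfer
map is averaging against the probability weights `‖νᵢ c‖²` (co-isometry), so the real and
imaginary parts of `c ↦ t c c` are harmonic; by the maximum principle they are constant along
every path of nonzero weight, hence constant by irreducibility.
-/

/-- The endpoint `g_ω(c)` of the path starting at `c` along the word `ω`. -/
def walkG {ι α : Type*} (g : ι → α → α) : List ι → α → α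
  | [], c => c
  | i :: ω, c => walkG g ω (g i c)

/-- The product `ν_ω(c)` of the transition weights along the path starting at `c`
following the word `ω`. -/
def walkNu {ι α : Type*} (g : ι → α → α) (ν : ι → α → ℂ) : List ι → α → ℂ
  | [], _ => 1
  | i :: ω, c => ν i c * walkNu g ν ω (g i c)

open scoped InnerProductSpace ComplexConjugate

section RandomWalk

variable {ι M : Type*} [Fintype ι] (g : ι → M → M) (ν : ι → M → ℂ)

def walkTransfer (t : M → M → ℂ) : M → M → ℂ :=
  fun c d => ∑ i, conj (ν i c) * ν i d * t (g i c) (g i d)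

variable {g ν}

theorem walkTransfer_apply_self (t : M → M → ℂ) (c : M) :
    walkTransfer g ν t c c = ∑ i, ((‖ν i c‖ ^ 2 : ℝ) : ℂ) * t (g i c) (g i c) := by
  simp only [walkTransfer, Complex.conj_mul', Complex.ofReal_pow]

theorem eq_zero_of_walkTransfer_eq {t : M → M → ℂ} (ht : walkTransfer g ν t = t) (n : ℕ) :
    ∀ c d, (∀ ω : List ι, ω.length = n → walkNu g ν ω c = 0 ∨ walkNu g ν ω d = 0) →
      t c d = 0 := by
  induction n with
  | zero =>
    intro c d h
    rcases h [] rfl with h | h <;> simp [walkNu] at h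
  | succ n ih =>
    intro c d h
    rw [← ht]
    refine Finset.sum_eq_zero fun i _ => ?_
    by_cases hc : ν i c = 0
    · simp [hc]
    by_cases hd : ν i d = 0
    · simp [hd]
    have hstep : t (g i c) (g i d) = 0 := ih _ _ fun ω hω => by
      simpa [walkNu, hc, hd] using h (i :: ω) (by simp [hω])
    rw [hstep, mul_zero]

theorem eq_zero_of_walkTransfer_eq_of_ne {t : M → M → ℂ} (ht : walkTransfer g ν t = t)
    (hsep : ∀ c₁ c₂ : M, c₁ ≠ c₂ → ∃ n : ℕ, ∀ ω : List ι, n ≤ ω.length →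
      walkNu g ν ω c₁ = 0 ∨ walkNu g ν ω c₂ = 0)
    {c d : M} (hcd : c ≠ d) : t c d = 0 := by
  obtain ⟨n, hn⟩ := hsep c d hcd
  exact eq_zero_of_walkTransfer_eq ht n c d fun ω hω => hn ω hω.ge

section MaximumPrinciple

variable {ψ : M → ℝ} (hν : ∀ c, ∑ i, ‖ν i c‖ ^ 2 = 1)
  (hψ : ∀ c, ψ c = ∑ i, ‖ν i c‖ ^ 2 * ψ (g i c))
include hν hψ

theorem apply_g_eq_of_forall_le {c₀ : M} (hmax : ∀ c, ψ c ≤ ψ c₀) {c : M}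
    (hc : ψ c = ψ c₀) {i : ι} (hi : ν i c ≠ 0) : ψ (g i c) = ψ c₀ := by
  have hle : ∀ j ∈ Finset.univ, ‖ν j c‖ ^ 2 * ψ (g j c) ≤ ‖ν j c‖ ^ 2 * ψ c₀ :=
    fun j _ => mul_le_mul_of_nonneg_left (hmax _) (sq_nonneg _)
  have hsum : ∑ j, ‖ν j c‖ ^ 2 * ψ (g j c) = ∑ j, ‖ν j c‖ ^ 2 * ψ c₀ := by
    rw [← hψ, hc, ← Finset.sum_mul, hν, one_mul]
  exact mul_left_cancel₀ (by positivity)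
    ((Finset.sum_eq_sum_iff_of_le hle).1 hsum i (Finset.mem_univ i))

theorem apply_walkG_eq_of_forall_le {c₀ : M} (hmax : ∀ c, ψ c ≤ ψ c₀) (ω : List ι) :
    ∀ c, ψ c = ψ c₀ → walkNu g ν ω c ≠ 0 → ψ (walkG g ω c) = ψ c₀ := by
  induction ω with
  | nil => exact fun c hc _ => hc
  | cons i ω ih =>
    intro c hc hω
    rw [walkNu, mul_ne_zero_iff] at hω
    exact ih _ (apply_g_eq_of_forall_le hν hψ hmax hc hω.1) hω.2

theorem eq_of_harmonic [Finite M]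
    (hirr : ∀ c₁ c₂ : M, ∃ ω : List ι, walkG g ω c₁ = c₂ ∧ walkNu g ν ω c₁ ≠ 0)
    (c d : M) : ψ c = ψ d := by
  have : Nonempty M := ⟨c⟩
  obtain ⟨c₀, hmax⟩ := Finite.exists_max ψ
  have hconst : ∀ c, ψ c = ψ c₀ := fun c => by
    obtain ⟨ω, rfl, hω⟩ := hirr c₀ c
    exact apply_walkG_eq_of_forall_le hν hψ hmax ω c₀ rfl hω
  rw [hconst c, hconst d]

end MaximumPrinciple

theorem eq_of_harmonic_complex [Finite M] (hν : ∀ c, ∑ i, ‖ν i c‖ ^ 2 = 1)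
    (hirr : ∀ c₁ c₂ : M, ∃ ω : List ι, walkG g ω c₁ = c₂ ∧ walkNu g ν ω c₁ ≠ 0)
    {ψ : M → ℂ} (hψ : ∀ c, ψ c = ∑ i, ((‖ν i c‖ ^ 2 : ℝ) : ℂ) * ψ (g i c)) (c d : M) :
    ψ c = ψ d := by
  refine Complex.ext (eq_of_harmonic (ψ := fun c => (ψ c).re) hν (fun c => ?_) hirr c d)
    (eq_of_harmonic (ψ := fun c => (ψ c).im) hν (fun c => ?_) hirr c d)
  · rw [hψ c, Complex.re_sum]
    simp only [Complex.re_ofReal_mul]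
  · rw [hψ c, Complex.im_sum]
    simp only [Complex.im_ofReal_mul]

theorem exists_eq_of_walkTransfer_eq [Finite M] (hν : ∀ c, ∑ i, ‖ν i c‖ ^ 2 = 1)
    (hirr : ∀ c₁ c₂ : M, ∃ ω : List ι, walkG g ω c₁ = c₂ ∧ walkNu g ν ω c₁ ≠ 0)
    (hsep : ∀ c₁ c₂ : M, c₁ ≠ c₂ → ∃ n : ℕ, ∀ ω : List ι, n ≤ ω.length →
      walkNu g ν ω c₁ = 0 ∨ walkNu g ν ω c₂ = 0)
    {t : M → M → ℂ} (ht : walkTransfer g ν t = t) :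
    ∃ lam : ℂ, (∀ c, t c c = lam) ∧ ∀ c d, c ≠ d → t c d = 0 := by
  rcases isEmpty_or_nonempty M with hM | ⟨⟨c₀⟩⟩
  · exact ⟨0, isEmptyElim, isEmptyElim⟩
  refine ⟨t c₀ c₀, fun c => eq_of_harmonic_complex (ψ := fun c => t c c) hν hirr (fun c => ?_) c c₀,
    fun c d => eq_zero_of_walkTransfer_eq_of_ne ht hsep⟩
  rw [← walkTransfer_apply_self, ht]

end RandomWalk

section Hilbert

variable {𝕜 E : Type*} [RCLike 𝕜] [NormedAddCommGroup E] [InnerProductSpace 𝕜 E]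

theorem inner_apply_eq_of_sub_mem_orthogonal {K₀ : Submodule 𝕜 E} {P : E → E}
    (hP : ∀ v, v - P v ∈ K₀ᗮ) {u : E} (hu : u ∈ K₀) (v : E) : ⟪u, P v⟫_𝕜 = ⟪u, v⟫_𝕜 := by
  have h := Submodule.inner_right_of_mem_orthogonal hu (hP v)
  rwa [inner_sub_right, sub_eq_zero, eq_comm] at h

theorem apply_eq_self_of_mem {K₀ : Submodule 𝕜 E} {P : E → E} (hP₁ : ∀ v, P v ∈ K₀)
    (hP₂ : ∀ v, v - P v ∈ K₀ᗮ) {v : E} (hv : v ∈ K₀) : P v = v := by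
  have h := Submodule.inner_right_of_mem_orthogonal (K₀.sub_mem hv (hP₁ v)) (hP₂ v)
  rw [inner_self_eq_zero, sub_eq_zero] at h
  exact h.symm

theorem eq_zero_of_mem_span_of_inner_eq_zero {s : Set E} {x : E} (hx : x ∈ Submodule.span 𝕜 s)
    (h : ∀ u ∈ s, ⟪u, x⟫_𝕜 = 0) : x = 0 := by
  have hle : Submodule.span 𝕜 s ≤ (𝕜 ∙ x)ᗮ := Submodule.span_le.2 fun u hu =>
    Submodule.mem_orthogonal_singleton_iff_inner_left.2 (h u hu)
  exact inner_self_eq_zero.1 (Submodule.mem_orthogonal_singleton_iff_inner_left.1 (hle hx))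

theorem Orthonormal.eq_smul_of_inner_eq {M : Type*} {e : M → E} (he : Orthonormal 𝕜 e)
    {x : E} (hx : x ∈ Submodule.span 𝕜 (Set.range e)) {d : M} {lam : 𝕜}
    (hd : ⟪e d, x⟫_𝕜 = lam) (hoff : ∀ c, c ≠ d → ⟪e c, x⟫_𝕜 = 0) : x = lam • e d := by
  refine sub_eq_zero.1 (eq_zero_of_mem_span_of_inner_eq_zero
    (Submodule.sub_mem _ hx (Submodule.smul_mem _ _ (Submodule.subset_span ⟨d, rfl⟩))) ?_)
  rintro _ ⟨c, rfl⟩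
  rw [inner_sub_right, inner_smul_right]
  by_cases hcd : c = d
  · rw [hcd, hd, inner_self_eq_norm_sq_to_K, he.1 d]
    simp
  · rw [hoff c hcd, he.inner_eq_zero hcd]
    simp

variable [CompleteSpace E] {ι : Type*} [Fintype ι] {V : ι → E →L[𝕜] E}

theorem sum_norm_adjoint_apply_sq_s8
    (hco : ∑ i, (V i).comp (ContinuousLinearMap.adjoint (V i)) = 1) (x : E) :
    ∑ i, ‖ContinuousLinearMap.adjoint (V i) x‖ ^ 2 = ‖x‖ ^ 2 := by
  have h : ⟪x, (∑ i, (V i).comp (ContinuousLinearMap.adjoint (V i))) x⟫_𝕜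
      = ∑ i, ⟪ContinuousLinearMap.adjoint (V i) x, ContinuousLinearMap.adjoint (V i) x⟫_𝕜 := by
    simp only [sum_apply, inner_sum, ContinuousLinearMap.comp_apply,
      ContinuousLinearMap.adjoint_inner_left]
  simp only [hco, one_apply_eq_self, inner_self_eq_norm_sq_to_K] at h
  exact_mod_cast h.symm

end Hilbert

section RandomWalkRepresentation

variable {K : Type*} [NormedAddCommGroup K] [InnerProductSpace ℂ K] [CompleteSpace K]
  {ι M : Type*} [Fintype ι] {V : ι → K →L[ℂ] K} {e : M → K} {g : ι → M → M} {ν : ι → M → ℂ}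

theorem sum_norm_weight_sq (hco : ∑ i, (V i).comp (ContinuousLinearMap.adjoint (V i)) = 1)
    (hon : Orthonormal ℂ e)
    (hwalk : ∀ i c, ContinuousLinearMap.adjoint (V i) (e c) = ν i c • e (g i c)) (c : M) :
    ∑ i, ‖ν i c‖ ^ 2 = 1 := by
  simpa [hwalk, norm_smul, hon.1] using sum_norm_adjoint_apply_sq_s8 hco (e c)

theorem walkTransfer_inner_apply_eq
    (hwalk : ∀ i c, ContinuousLinearMap.adjoint (V i) (e c) = ν i c • e (g i c))
    {K₀ : Submodule ℂ K} (he : ∀ c, e c ∈ K₀) {P : K →L[ℂ] K} (hP₁ : ∀ v, P v ∈ K₀)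
    (hP₂ : ∀ v, v - P v ∈ K₀ᗮ) {T : K →L[ℂ] K}
    (hT : P.comp ((∑ i, (V i).comp (T.comp (ContinuousLinearMap.adjoint (V i)))).comp P) = T) :
    walkTransfer g ν (fun c d => ⟪e c, T (e d)⟫_ℂ) = fun c d => ⟪e c, T (e d)⟫_ℂ := by
  funext c d
  conv_rhs => rw [← hT]
  simp only [walkTransfer, ContinuousLinearMap.comp_apply,
    apply_eq_self_of_mem hP₁ hP₂ (he d), inner_apply_eq_of_sub_mem_orthogonal hP₂ (he c),
    sum_apply, inner_sum]
  refine Finset.sum_congr rfl fun i _ => ?_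
  rw [← ContinuousLinearMap.adjoint_inner_left (V i), hwalk, hwalk, map_smul, inner_smul_left,
    inner_smul_right, mul_assoc]

end RandomWalkRepresentation

theorem stmt8_general {K : Type*} [NormedAddCommGroup K] [InnerProductSpace ℂ K] [CompleteSpace K]
    {N : ℕ} (V : Fin N → K →L[ℂ] K)
    (hco : ∑ i, (V i).comp (ContinuousLinearMap.adjoint (V i)) = 1)
    {M : Type*} [Fintype M] (e : M → K) (hon : Orthonormal ℂ e)
    (K₀ : Submodule ℂ K) (hK₀ : K₀ = Submodule.span ℂ (Set.range e))
    (g : Fin N → M → M) (ν : Fin N → M → ℂ)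
    (hwalk : ∀ i c, ContinuousLinearMap.adjoint (V i) (e c) = ν i c • e (g i c))
    (hirr : ∀ c₁ c₂ : M, ∃ ω : List (Fin N), walkG g ω c₁ = c₂ ∧ walkNu g ν ω c₁ ≠ 0)
    (hsep : ∀ c₁ c₂ : M, c₁ ≠ c₂ → ∃ n : ℕ, ∀ ω : List (Fin N), n ≤ ω.length →
      walkNu g ν ω c₁ = 0 ∨ walkNu g ν ω c₂ = 0)
    (P : K →L[ℂ] K) (hP1 : ∀ v, P v ∈ K₀) (hP2 : ∀ v, v - P v ∈ K₀ᗮ)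
    (T : K →L[ℂ] K)
    (hTeq : P.comp ((∑ i, (V i).comp (T.comp (ContinuousLinearMap.adjoint (V i)))).comp P)
      = T) :
    ∃ lam : ℂ, ∀ v ∈ K₀, T v = lam • v := by
  subst hK₀
  have he : ∀ c, e c ∈ Submodule.span ℂ (Set.range e) := fun c => Submodule.subset_span ⟨c, rfl⟩
  obtain ⟨lam, hdiag, hoff⟩ := exists_eq_of_walkTransfer_eq (sum_norm_weight_sq hco hon hwalk)
    hirr hsep (walkTransfer_inner_apply_eq hwalk he hP1 hP2 hTeq)
  have hTe : ∀ d, T (e d) = lam • e d := fun d =>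
    hon.eq_smul_of_inner_eq (hTeq ▸ hP1 _) (hdiag d) fun c hcd => hoff c d hcd
  exact ⟨lam, fun v hv => LinearMap.eqOn_span' (f := (T : K →ₗ[ℂ] K)) (g := lam • LinearMap.id)
    (by rintro _ ⟨d, rfl⟩; exact hTe d) hv⟩

/-- Let `(K, (Vᵢ))` be a row co-isometry acting on a subspace `K₀` with orthonormal basis
`(e c)_{c ∈ M}` (`M` finite) as a random walk: `Vᵢ* (e c) = νᵢ(c) • e (gᵢ c)`. If the
random walk is irreducible and separating, then any operator `T` on `K₀` satisfying
`P_{K₀} (∑ᵢ Vᵢ T Vᵢ*) P_{K₀} = T` is a scalar multiple of the identity on `K₀`. -/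
theorem stmt8 {K : Type*} [NormedAddCommGroup K] [InnerProductSpace ℂ K] [CompleteSpace K]
    {N : ℕ} (V : Fin N → K →L[ℂ] K)
    (hco : ∑ i, (V i).comp (ContinuousLinearMap.adjoint (V i)) = 1)
    {M : Type*} [Fintype M] (e : M → K) (hon : Orthonormal ℂ e)
    (K₀ : Submodule ℂ K) (hK₀ : K₀ = Submodule.span ℂ (Set.range e))
    (g : Fin N → M → M) (ν : Fin N → M → ℂ)
    (hwalk : ∀ i c, ContinuousLinearMap.adjoint (V i) (e c) = ν i c • e (g i c))
    (hirr : ∀ c₁ c₂ : M, ∃ ω : List (Fin N), walkG g ω c₁ = c₂ ∧ walkNu g ν ω c₁ ≠ 0)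
    (hsep : ∀ c₁ c₂ : M, c₁ ≠ c₂ → ∃ n : ℕ, ∀ ω : List (Fin N), n ≤ ω.length →
      walkNu g ν ω c₁ = 0 ∨ walkNu g ν ω c₂ = 0)
    (P : K →L[ℂ] K) (hP1 : ∀ v, P v ∈ K₀) (hP2 : ∀ v, v - P v ∈ K₀ᗮ)
    (T : K →L[ℂ] K) (hTr : ∀ v, T v ∈ K₀)
    (hTeq : P.comp ((∑ i, (V i).comp (T.comp (ContinuousLinearMap.adjoint (V i)))).comp P)
      = T) :
    ∃ lam : ℂ, ∀ v ∈ K₀, T v = lam • v :=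
  stmt8_general V hco e hon K₀ hK₀ g ν hwalk hirr hsep P hP1 hP2 T hTeq
end

section
/- Let g₀,…,g_{N-1} be contractions on a complete metric space T, and let ν_i : T → ℂ be continuous weight functions with Σ_{i=0}^{N-1} |ν_i(t)|² = 1 for all t. Then there exists δ > 0 such that any two distinct minimal compact invariant sets M₁, M₂ satisfy dist(M₁, M₂) ≥ δ. In particular, there are only finitely many minimal compact invariant sets. -/
/-!
Every minimal compact invariant set `M` lies in the attractor `K` of the contracting system
`{gᵢ}`: at a point `p ∈ M` closest to `K`, some `gᵢ` with `νᵢ(p) ≠ 0` keeps us in `M` and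
shrinks the distance to `K` by the factor `c < 1`, so that distance is `0`. The open sets
`{νᵢ ≠ 0}` cover the compact set `K`; a Lebesgue number `δ` of this cover makes any two
points at distance `< δ` share an admissible map `gᵢ`. Distinct minimal sets are disjoint,
so a closest pair `(p, q) ∈ M₁ × M₂` has `p ≠ q`; were `dist p q < δ`, a common `gᵢ` would
map it to a strictly closer pair in `M₁ × M₂`. Finiteness follows because `K` is totally
bounded.
-/

/-- A set `M` is invariant for the random walk: possible transitions from points of `M`
stay in `M`. -/
def InvariantSet {ι T : Type*} (g : ι → T → T) (ν : ι → T → ℂ) (M : Set T) : Prop :=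
  ∀ t ∈ M, ∀ i, ν i t ≠ 0 → g i t ∈ M

/-- A minimal compact invariant set: nonempty, compact, invariant, and containing no
proper nonempty compact invariant subset. -/
def MinimalCompactInvariant {ι T : Type*} [TopologicalSpace T]
    (g : ι → T → T) (ν : ι → T → ℂ) (M : Set T) : Prop :=
  M.Nonempty ∧ IsCompact M ∧ InvariantSet g ν M ∧
    ∀ M' ⊆ M, M'.Nonempty → IsCompact M' → InvariantSet g ν M' → M' = M

open Set Metric Function

open scoped ENNReal NNReal

section Lipschitz

variable {X Y : Type*} [PseudoEMetricSpace X] [PseudoEMetricSpace Y] {f : X → Y} {c : ℝ≥0}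
  {s t : Set X}

theorem LipschitzWith.infEDist_image_le (hf : LipschitzWith c f) (hs : IsCompact s)
    (hs₀ : s.Nonempty) (x : X) : infEDist (f x) (f '' s) ≤ c * infEDist x s := by
  obtain ⟨y, hy, hxy⟩ := hs.exists_infEDist_eq_edist hs₀ x
  calc infEDist (f x) (f '' s) ≤ edist (f x) (f y) :=
        infEDist_le_edist_of_mem (mem_image_of_mem f hy)
    _ ≤ c * edist x y := hf x y
    _ = c * infEDist x s := by rw [hxy]

theorem LipschitzWith.hausdorffEDist_image_le (hf : LipschitzWith c f) (hs : IsCompact s)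
    (hs₀ : s.Nonempty) (ht : IsCompact t) (ht₀ : t.Nonempty) :
    hausdorffEDist (f '' s) (f '' t) ≤ c * hausdorffEDist s t := by
  refine hausdorffEDist_le_of_infEDist ?_ ?_
  · rintro _ ⟨x, hx, rfl⟩
    calc infEDist (f x) (f '' t) ≤ c * infEDist x t := hf.infEDist_image_le ht ht₀ x
      _ ≤ c * hausdorffEDist s t := by gcongr; exact infEDist_le_hausdorffEDist_of_mem hx
  · rintro _ ⟨y, hy, rfl⟩
    calc infEDist (f y) (f '' s) ≤ c * infEDist y s := hf.infEDist_image_le hs hs₀ y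
      _ ≤ c * hausdorffEDist s t := by
        gcongr; rw [hausdorffEDist_comm]; exact infEDist_le_hausdorffEDist_of_mem hy

end Lipschitz

section Hutchinson

open TopologicalSpace

variable {ι T : Type*} [Finite ι] [Nonempty ι] [MetricSpace T] {g : ι → T → T}

def hutchinson (hg : ∀ i, Continuous (g i)) (K : NonemptyCompacts T) : NonemptyCompacts T :=
  ⟨⟨⋃ i, g i '' K, isCompact_iUnion fun i => K.isCompact.image (hg i)⟩,
    nonempty_iUnion.2 ⟨Classical.arbitrary ι, K.nonempty.image _⟩⟩

theorem lipschitzWith_hutchinson {c : ℝ≥0} (hg : ∀ i, LipschitzWith c (g i)) :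
    LipschitzWith c (hutchinson fun i => (hg i).continuous) := fun K L =>
  calc hausdorffEDist (⋃ i, g i '' K) (⋃ i, g i '' L)
      ≤ ⨆ i, hausdorffEDist (g i '' K) (g i '' L) := hausdorffEDist_iUnion_le
    _ ≤ c * hausdorffEDist (K : Set T) L := iSup_le fun i =>
        (hg i).hausdorffEDist_image_le K.isCompact K.nonempty L.isCompact L.nonempty

theorem exists_nonempty_isCompact_forall_mapsTo [CompleteSpace T] [Nonempty T] {c : ℝ≥0}
    (hc : c < 1) (hg : ∀ i, LipschitzWith c (g i)) :
    ∃ K : Set T, K.Nonempty ∧ IsCompact K ∧ ∀ i, MapsTo (g i) K K := by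
  have hF : ContractingWith c (hutchinson fun i => (hg i).continuous) :=
    ⟨hc, lipschitzWith_hutchinson hg⟩
  set K := ContractingWith.fixedPoint _ hF
  have hK : (⋃ i, g i '' K) = K := congrArg SetLike.coe hF.fixedPoint_isFixedPt
  exact ⟨K, K.nonempty, K.isCompact,
    fun i x hx => hK ▸ mem_iUnion_of_mem i (mem_image_of_mem _ hx)⟩

end Hutchinson

theorem IsCompact.exists_pos_forall_dist_lt_exists_ne_zero {ι T E : Type*}
    [PseudoMetricSpace T] [TopologicalSpace E] [T1Space E] [Zero E] {ν : ι → T → E}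
    {K : Set T} (hK : IsCompact K) (hν : ∀ i, Continuous (ν i)) (hν₀ : ∀ t ∈ K, ∃ i, ν i t ≠ 0) :
    ∃ η > 0, ∀ x ∈ K, ∀ y, dist x y < η → ∃ i, ν i x ≠ 0 ∧ ν i y ≠ 0 := by
  obtain ⟨η, hη, hball⟩ :=
    lebesgue_number_lemma_of_metric hK (c := fun i => {t | ν i t ≠ 0})
    (fun i => isOpen_compl_singleton.preimage (hν i)) fun t ht => mem_iUnion.2 (hν₀ t ht)
  refine ⟨η, hη, fun x hx y hxy => ?_⟩
  obtain ⟨i, hi⟩ := hball x hx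
  exact ⟨i, hi (mem_ball_self hη), hi (mem_ball'.2 hxy)⟩

theorem TotallyBounded.finite_of_isSeparated {X : Type*} [PseudoEMetricSpace X]
    {s C : Set X} (hs : TotallyBounded s) {ε : ℝ≥0} (hε : ε ≠ 0) (hCs : C ⊆ s)
    (hC : IsSeparated ε C) : C.Finite := by
  obtain ⟨N, -, hN, hsN⟩ :=
    exists_finite_isCover_of_totallyBounded (ε := ε / 2) (by simpa) hs
  refine encard_lt_top_iff.1 ?_
  calc C.encard ≤ packingNumber (2 * (ε / 2)) s := by
        rw [mul_div_cancel₀ _ two_ne_zero]; exact hC.encard_le_packingNumber hCs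
    _ ≤ externalCoveringNumber (ε / 2) s := packingNumber_two_mul_le_externalCoveringNumber _ _
    _ ≤ N.encard := hsN.externalCoveringNumber_le_encard
    _ < ⊤ := hN.encard_lt_top

theorem TotallyBounded.finite_of_pairwise_le_dist {X : Type*} [PseudoMetricSpace X]
    {K : Set X} (hK : TotallyBounded K) {S : Set (Set X)} (hne : ∀ M ∈ S, M.Nonempty)
    (hsub : ∀ M ∈ S, M ⊆ K) {δ : ℝ} (hδ : 0 < δ)
    (hsep : ∀ M₁ ∈ S, ∀ M₂ ∈ S, M₁ ≠ M₂ → ∀ x ∈ M₁, ∀ y ∈ M₂, δ ≤ dist x y) : S.Finite := by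
  choose f hf using fun M : S => hne M M.2
  have hf_sep (M₁ M₂ : S) (h : M₁ ≠ M₂) : δ ≤ dist (f M₁) (f M₂) :=
    hsep _ M₁.2 _ M₂.2 (Subtype.coe_injective.ne h) _ (hf M₁) _ (hf M₂)
  have hf_inj : Injective f := fun M₁ M₂ h => by
    by_contra hne
    exact (hf_sep M₁ M₂ hne).not_gt (by rwa [h, dist_self])
  have hrange : (range f).Finite := by
    refine hK.finite_of_isSeparated (ε := (δ / 2).toNNReal) (by simpa using hδ)
      (range_subset_iff.2 fun M => hsub M M.2 (hf M)) ?_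
    rintro _ ⟨M₁, rfl⟩ _ ⟨M₂, rfl⟩ hne
    have h := hf_sep M₁ M₂ (ne_of_apply_ne f hne)
    show ENNReal.ofReal (δ / 2) < edist _ _
    rw [edist_dist, ENNReal.ofReal_lt_ofReal_iff (by linarith)]
    linarith
  have := hrange.to_subtype
  exact finite_coe_iff.1 (Finite.of_injective _ (rangeFactorization_injective.2 hf_inj))

namespace MinimalCompactInvariant

variable {ι T : Type*} {g : ι → T → T} {ν : ι → T → ℂ} {M M₁ M₂ : Set T}

theorem subset_of_inter_nonempty [TopologicalSpace T] (hM : MinimalCompactInvariant g ν M)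
    {S : Set T} (hS : IsClosed S) (hSinv : InvariantSet g ν S) (hMS : (M ∩ S).Nonempty) :
    M ⊆ S := by
  obtain ⟨-, hMc, hMinv, hMmin⟩ := hM
  exact inter_eq_left.1 <| hMmin _ inter_subset_left hMS (hMc.inter_right hS)
    fun t ht i hi => ⟨hMinv t ht.1 i hi, hSinv t ht.2 i hi⟩

theorem disjoint [TopologicalSpace T] [T2Space T] (h₁ : MinimalCompactInvariant g ν M₁)
    (h₂ : MinimalCompactInvariant g ν M₂) (hne : M₁ ≠ M₂) : Disjoint M₁ M₂ := by
  by_contra h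
  rw [not_disjoint_iff_nonempty_inter] at h
  exact hne <| (h₁.subset_of_inter_nonempty h₂.2.1.isClosed h₂.2.2.1 h).antisymm
    (h₂.subset_of_inter_nonempty h₁.2.1.isClosed h₁.2.2.1 (inter_comm M₁ M₂ ▸ h))

theorem subset_of_mapsTo [MetricSpace T] (hM : MinimalCompactInvariant g ν M) {K : Set T}
    (hK : IsCompact K) (hK₀ : K.Nonempty) (hKg : ∀ i, MapsTo (g i) K K) {c : ℝ≥0}
    (hc : c < 1) (hg : ∀ i, LipschitzWith c (g i)) (hν₀ : ∀ t, ∃ i, ν i t ≠ 0) :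
    M ⊆ K := by
  refine hM.subset_of_inter_nonempty hK.isClosed (fun t ht i _ => hKg i ht) ?_
  obtain ⟨p, hp, hpmin⟩ := hM.2.1.exists_isMinOn hM.1 continuous_infEDist.continuousOn
  suffices infEDist p K = 0 from ⟨p, hp, (mem_iff_infEDist_zero_of_closed hK.isClosed).2 this⟩
  by_contra h0
  obtain ⟨i, hi⟩ := hν₀ p
  have hstep : infEDist (g i p) K ≤ c * infEDist p K :=
    (infEDist_anti (image_subset_iff.2 (hKg i))).trans ((hg i).infEDist_image_le hK hK₀ p)
  have hshrink : c * infEDist p K < infEDist p K := by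
    simpa using (ENNReal.mul_lt_mul_iff_left h0 (infEDist_ne_top hK₀)).2
      (show (c : ℝ≥0∞) < 1 by exact_mod_cast hc)
  exact (isMinOn_iff.1 hpmin _ (hM.2.2.1 p hp i hi)).not_gt (hstep.trans_lt hshrink)

theorem le_dist [MetricSpace T] (h₁ : MinimalCompactInvariant g ν M₁)
    (h₂ : MinimalCompactInvariant g ν M₂) (hne : M₁ ≠ M₂) {c : ℝ≥0} (hc : c < 1)
    (hg : ∀ i, LipschitzWith c (g i)) {η : ℝ}
    (hη : ∀ x ∈ M₁, ∀ y ∈ M₂, dist x y < η → ∃ i, ν i x ≠ 0 ∧ ν i y ≠ 0) :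
    ∀ x ∈ M₁, ∀ y ∈ M₂, η ≤ dist x y := by
  obtain ⟨⟨p, q⟩, ⟨hp, hq⟩, hmin⟩ :=
    (h₁.2.1.prod h₂.2.1).exists_isMinOn (h₁.1.prod h₂.1) continuous_dist.continuousOn
  have hpq : p ≠ q := (h₁.disjoint h₂ hne).ne_of_mem hp hq
  intro x hx y hy
  by_contra! hlt
  obtain ⟨i, hip, hiq⟩ := hη p hp q hq ((isMinOn_iff.1 hmin (x, y) ⟨hx, hy⟩).trans_lt hlt)
  have hmin_i : dist p q ≤ dist (g i p) (g i q) :=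
    isMinOn_iff.1 hmin (g i p, g i q) ⟨h₁.2.2.1 p hp i hip, h₂.2.2.1 q hq i hiq⟩
  exact (hmin_i.trans ((hg i).dist_le_mul p q)).not_gt
    (mul_lt_of_lt_one_left (dist_pos.2 hpq) hc)

end MinimalCompactInvariant

theorem exists_isCompact_forall_minimalCompactInvariant_subset {ι T : Type*} [Finite ι]
    [MetricSpace T] [CompleteSpace T] {g : ι → T → T} {ν : ι → T → ℂ} {c : ℝ≥0} (hc : c < 1)
    (hg : ∀ i, LipschitzWith c (g i)) (hν₀ : ∀ t, ∃ i, ν i t ≠ 0) :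
    ∃ K : Set T, IsCompact K ∧ ∀ M, MinimalCompactInvariant g ν M → M ⊆ K := by
  rcases isEmpty_or_nonempty T with hT | hT
  · exact ⟨∅, isCompact_empty, fun M _ => (eq_empty_of_isEmpty M).subset⟩
  obtain ⟨i, -⟩ := hν₀ (Classical.arbitrary T)
  have : Nonempty ι := ⟨i⟩
  obtain ⟨K, hK₀, hK, hKg⟩ := exists_nonempty_isCompact_forall_mapsTo hc hg
  exact ⟨K, hK, fun M hM => hM.subset_of_mapsTo hK hK₀ hKg hc hg hν₀⟩

/-- For contractions `gᵢ` on a complete metric space with continuous weights `νᵢ`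
satisfying `∑ᵢ |νᵢ(t)|² = 1`, there is a `δ > 0` such that distinct minimal compact
invariant sets are at distance at least `δ`; in particular there are only finitely many
minimal compact invariant sets. -/
theorem stmt10 {T : Type*} [MetricSpace T] [CompleteSpace T] {N : ℕ}
    (g : Fin N → T → T) (c : NNReal) (hc : c < 1) (hg : ∀ i, LipschitzWith c (g i))
    (ν : Fin N → T → ℂ) (hν : ∀ i, Continuous (ν i))
    (hsum : ∀ t, ∑ i, ‖ν i t‖ ^ 2 = 1) :
    (∃ δ > (0 : ℝ), ∀ M₁ M₂ : Set T, MinimalCompactInvariant g ν M₁ →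
        MinimalCompactInvariant g ν M₂ → M₁ ≠ M₂ →
        ∀ x ∈ M₁, ∀ y ∈ M₂, δ ≤ dist x y) ∧
      {M : Set T | MinimalCompactInvariant g ν M}.Finite := by
  have hν₀ (t : T) : ∃ i, ν i t ≠ 0 := by
    by_contra! h
    simpa [h] using hsum t
  obtain ⟨K, hK, hMK⟩ := exists_isCompact_forall_minimalCompactInvariant_subset hc hg hν₀
  obtain ⟨η, hη, hshare⟩ := hK.exists_pos_forall_dist_lt_exists_ne_zero hν fun t _ => hν₀ t
  have hsep (M₁ M₂ : Set T) (h₁ : MinimalCompactInvariant g ν M₁)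
      (h₂ : MinimalCompactInvariant g ν M₂) (hne : M₁ ≠ M₂) :
      ∀ x ∈ M₁, ∀ y ∈ M₂, η ≤ dist x y :=
    h₁.le_dist h₂ hne hc hg fun x hx y _ => hshare x (hMK M₁ h₁ hx) y
  exact ⟨⟨η, hη, hsep⟩, hK.totallyBounded.finite_of_pairwise_le_dist (fun M hM => hM.1) hMK
    hη fun M₁ h₁ M₂ h₂ => hsep M₁ M₂ h₁ h₂⟩
end

section
/- Under Assumptions: e : T → K continuous with unit vectors spanning K, V_i* e_t = ν_i(t) e_{g_i(t)} with the g_i contractions on a complete metric space T, and Σ_i V_i V_i* = I. If M₁, M₂ are closed invariant subsets of T with dist(M₁, M₂) > 0, then ⟨e_{t₁}, e_{t₂}⟩ = 0 for all t₁ ∈ M₁ and t₂ ∈ M₂. -/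
open ComplexConjugate

theorem inner_eq_sum_inner_adjoint {𝕜 E ι : Type*} [RCLike 𝕜] [NormedAddCommGroup E]
    [InnerProductSpace 𝕜 E] [CompleteSpace E] [Fintype ι] (V : ι → E →L[𝕜] E)
    (hV : ∑ i, (V i).comp (ContinuousLinearMap.adjoint (V i)) = 1) (x y : E) :
    inner 𝕜 x y = ∑ i, inner 𝕜 (ContinuousLinearMap.adjoint (V i) x)
      (ContinuousLinearMap.adjoint (V i) y) := by
  have hy : y = ∑ i, V i (ContinuousLinearMap.adjoint (V i) y) := by
    simpa using (congrArg (fun L : E →L[𝕜] E => L y) hV).symm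
  conv_lhs => rw [hy]
  simp only [inner_sum, ContinuousLinearMap.adjoint_inner_left]

section SeparatedInvariantSets

variable {T ι : Type*} [PseudoMetricSpace T] [Fintype ι] {g : ι → T → T} {ν : ι → T → ℂ}
  {k : T → T → ℂ} {c : NNReal} {M₁ M₂ : Set T} {d : ℝ}

theorem eq_zero_of_pow_mul_dist_lt (hg : ∀ i, LipschitzWith c (g i))
    (hi₁ : InvariantSet g ν M₁) (hi₂ : InvariantSet g ν M₂)
    (hdist : ∀ x ∈ M₁, ∀ y ∈ M₂, d ≤ dist x y)
    (hk : ∀ t₁ t₂, k t₁ t₂ = ∑ i, conj (ν i t₁) * ν i t₂ * k (g i t₁) (g i t₂)) (n : ℕ) :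
    ∀ t₁ ∈ M₁, ∀ t₂ ∈ M₂, (c : ℝ) ^ n * dist t₁ t₂ < d → k t₁ t₂ = 0 := by
  induction n with
  | zero =>
    intro t₁ ht₁ t₂ ht₂ h
    rw [pow_zero, one_mul] at h
    exact absurd (hdist t₁ ht₁ t₂ ht₂) h.not_ge
  | succ n ih =>
    intro t₁ ht₁ t₂ ht₂ h
    rw [hk]
    refine Finset.sum_eq_zero fun i _ => ?_
    by_cases hν₁ : ν i t₁ = 0
    · simp [hν₁]
    by_cases hν₂ : ν i t₂ = 0
    · simp [hν₂]
    have hclose : (c : ℝ) ^ n * dist (g i t₁) (g i t₂) < d :=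
      calc (c : ℝ) ^ n * dist (g i t₁) (g i t₂)
          ≤ (c : ℝ) ^ n * (c * dist t₁ t₂) := by gcongr; exact (hg i).dist_le_mul _ _
        _ = (c : ℝ) ^ (n + 1) * dist t₁ t₂ := by ring
        _ < d := h
    rw [ih _ (hi₁ t₁ ht₁ i hν₁) _ (hi₂ t₂ ht₂ i hν₂) hclose, mul_zero]

theorem eq_zero_of_separated_invariant (hc : c < 1) (hg : ∀ i, LipschitzWith c (g i))
    (hi₁ : InvariantSet g ν M₁) (hi₂ : InvariantSet g ν M₂)
    (hd : 0 < d) (hdist : ∀ x ∈ M₁, ∀ y ∈ M₂, d ≤ dist x y)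
    (hk : ∀ t₁ t₂, k t₁ t₂ = ∑ i, conj (ν i t₁) * ν i t₂ * k (g i t₁) (g i t₂))
    {t₁ t₂ : T} (ht₁ : t₁ ∈ M₁) (ht₂ : t₂ ∈ M₂) : k t₁ t₂ = 0 := by
  have hlim : Filter.Tendsto (fun n : ℕ => (c : ℝ) ^ n * dist t₁ t₂) Filter.atTop
      (nhds (0 * dist t₁ t₂)) :=
    (tendsto_pow_atTop_nhds_zero_of_lt_one c.coe_nonneg hc).mul_const _
  rw [zero_mul] at hlim
  obtain ⟨n, hn⟩ := (hlim.eventually (gt_mem_nhds hd)).exists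
  exact eq_zero_of_pow_mul_dist_lt hg hi₁ hi₂ hdist hk n t₁ ht₁ t₂ ht₂ hn

end SeparatedInvariantSets

theorem stmt11_general {T K : Type*} [MetricSpace T]
    [NormedAddCommGroup K] [InnerProductSpace ℂ K] [CompleteSpace K] {N : ℕ}
    (g : Fin N → T → T) (c : NNReal) (hc : c < 1) (hg : ∀ i, LipschitzWith c (g i))
    (ν : Fin N → T → ℂ)
    (e : T → K)
    (V : Fin N → K →L[ℂ] K)
    (hco : ∑ i, (V i).comp (ContinuousLinearMap.adjoint (V i)) = 1)
    (hwalk : ∀ i t, ContinuousLinearMap.adjoint (V i) (e t) = ν i t • e (g i t))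
    (M₁ M₂ : Set T)
    (hi₁ : InvariantSet g ν M₁) (hi₂ : InvariantSet g ν M₂)
    (d : ℝ) (hd : 0 < d) (hdist : ∀ x ∈ M₁, ∀ y ∈ M₂, d ≤ dist x y)
    (t₁ : T) (ht₁ : t₁ ∈ M₁) (t₂ : T) (ht₂ : t₂ ∈ M₂) :
    (inner ℂ (e t₁) (e t₂) : ℂ) = 0 := by
  refine eq_zero_of_separated_invariant (k := fun s t => inner ℂ (e s) (e t))
    hc hg hi₁ hi₂ hd hdist (fun s t => ?_) ht₁ ht₂
  rw [inner_eq_sum_inner_adjoint V hco]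
  refine Finset.sum_congr rfl fun i _ => ?_
  rw [hwalk, hwalk, inner_smul_left, inner_smul_right, mul_assoc]

/-- Under the standing assumptions (`e : T → K` continuous unit vectors with dense span,
`Vᵢ* e_t = νᵢ(t) • e_{gᵢ(t)}` with `gᵢ` contractions on a complete metric space, and
`∑ᵢ Vᵢ Vᵢ* = I`), if `M₁, M₂` are closed invariant subsets with `dist(M₁, M₂) > 0`, then
`⟨e_{t₁}, e_{t₂}⟩ = 0` for all `t₁ ∈ M₁`, `t₂ ∈ M₂`. -/
theorem stmt11 {T K : Type*} [MetricSpace T] [CompleteSpace T]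
    [NormedAddCommGroup K] [InnerProductSpace ℂ K] [CompleteSpace K] {N : ℕ}
    (g : Fin N → T → T) (c : NNReal) (hc : c < 1) (hg : ∀ i, LipschitzWith c (g i))
    (ν : Fin N → T → ℂ)
    (e : T → K) (hecont : Continuous e) (heunit : ∀ t, ‖e t‖ = 1)
    (hspan : (Submodule.span ℂ (Set.range e)).topologicalClosure = ⊤)
    (V : Fin N → K →L[ℂ] K)
    (hco : ∑ i, (V i).comp (ContinuousLinearMap.adjoint (V i)) = 1)
    (hwalk : ∀ i t, ContinuousLinearMap.adjoint (V i) (e t) = ν i t • e (g i t))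
    (M₁ M₂ : Set T) (h₁ : IsClosed M₁) (h₂ : IsClosed M₂)
    (hi₁ : InvariantSet g ν M₁) (hi₂ : InvariantSet g ν M₂)
    (d : ℝ) (hd : 0 < d) (hdist : ∀ x ∈ M₁, ∀ y ∈ M₂, d ≤ dist x y)
    (t₁ : T) (ht₁ : t₁ ∈ M₁) (t₂ : T) (ht₂ : t₂ ∈ M₂) :
    (inner ℂ (e t₁) (e t₂) : ℂ) = 0 :=
  stmt11_general g c hc hg ν e V hco hwalk M₁ M₂ hi₁ hi₂ d hd hdist t₁ ht₁ t₂ ht₂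
end

section
/- Let K₁, K₂ be mutually orthogonal closed subspaces of a Hilbert space H, each invariant under S_i* for a Cuntz family (S_i)_{i=0}^{N-1} on H (isometries with orthogonal ranges, Σ_i S_i S_i* = I). Then the subspaces H(K₁) = span{S_ω v : v ∈ K₁, ω a finite word} and H(K₂) = span{S_ω v : v ∈ K₂, ω a finite word} are orthogonal. -/
/-!
For words `ω`, `τ`, the isometries with orthogonal ranges give `S_τ* S_ω = S_ω'` when `ω = τ ω'`,
`(S_τ')*` when `τ = ω τ'`, and `0` otherwise. Hence `⟪S_ω v, S_τ w⟫` is either `0` or of the form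
`⟪(S_τ')* v, w⟫` (or its mirror image), which vanishes because `K₁` is invariant under the `Sᵢ*`
and orthogonal to `K₂`. Orthogonality of the generators passes to their spans.
-/

section

open ContinuousLinearMap

variable {𝕜 H : Type*} [RCLike 𝕜] [NormedAddCommGroup H] [InnerProductSpace 𝕜 H] [CompleteSpace H]
  {ι : Type*} (S : ι → H →L[𝕜] H)

local notation "⟪" x ", " y "⟫" => inner 𝕜 x y

theorem inner_foldr_eq_zero_of_adjoint_mem {K₁ K₂ : Submodule 𝕜 H}
    (hperp : ∀ v ∈ K₁, ∀ w ∈ K₂, ⟪v, w⟫ = 0) (hinv₁ : ∀ i, ∀ v ∈ K₁, adjoint (S i) v ∈ K₁)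
    (τ : List ι) {v : H} (hv : v ∈ K₁) {w : H} (hw : w ∈ K₂) :
    ⟪v, τ.foldr (fun i u => S i u) w⟫ = 0 := by
  induction τ generalizing v with
  | nil => exact hperp v hv w hw
  | cons j τ ih =>
    rw [List.foldr_cons, ← adjoint_inner_left]
    exact ih (hinv₁ j v hv)

theorem inner_apply_apply_of_adjoint_comp [DecidableEq ι]
    (horth : ∀ i j, (adjoint (S j)).comp (S i) = if i = j then 1 else 0) (i j : ι) (x y : H) :
    ⟪S i x, S j y⟫ = if j = i then ⟪x, y⟫ else 0 := by
  rw [← adjoint_inner_right, ← comp_apply, horth j i]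
  split_ifs <;> simp

theorem inner_foldr_foldr_eq_zero [DecidableEq ι]
    (horth : ∀ i j, (adjoint (S j)).comp (S i) = if i = j then 1 else 0)
    {K₁ K₂ : Submodule 𝕜 H} (hperp : ∀ v ∈ K₁, ∀ w ∈ K₂, ⟪v, w⟫ = 0)
    (hinv₁ : ∀ i, ∀ v ∈ K₁, adjoint (S i) v ∈ K₁) (hinv₂ : ∀ i, ∀ w ∈ K₂, adjoint (S i) w ∈ K₂)
    (ω τ : List ι) {v : H} (hv : v ∈ K₁) {w : H} (hw : w ∈ K₂) :
    ⟪ω.foldr (fun i u => S i u) v, τ.foldr (fun i u => S i u) w⟫ = 0 := by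
  induction ω generalizing τ with
  | nil => exact inner_foldr_eq_zero_of_adjoint_mem S hperp hinv₁ τ hv hw
  | cons i ω ih =>
    cases τ with
    | nil =>
      have hperp' : ∀ w ∈ K₂, ∀ v ∈ K₁, ⟪w, v⟫ = 0 := fun w hw v hv => by
        rw [← inner_conj_symm, hperp v hv w hw, map_zero]
      rw [List.foldr_nil, ← inner_conj_symm,
        inner_foldr_eq_zero_of_adjoint_mem S hperp' hinv₂ _ hw hv, map_zero]
    | cons j τ =>
      rw [List.foldr_cons, List.foldr_cons, inner_apply_apply_of_adjoint_comp S horth]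
      split_ifs
      · exact ih τ
      · rfl

end

theorem stmt12_general {H : Type*} [NormedAddCommGroup H] [InnerProductSpace ℂ H] [CompleteSpace H]
    {N : ℕ} (S : Fin N → H →L[ℂ] H)
    (horth : ∀ i j, (ContinuousLinearMap.adjoint (S j)).comp (S i) =
      if i = j then 1 else 0)
    (K₁ K₂ : Submodule ℂ H)
    (hperp : ∀ v ∈ K₁, ∀ w ∈ K₂, (inner ℂ v w : ℂ) = 0)
    (hinv₁ : ∀ i, ∀ v ∈ K₁, ContinuousLinearMap.adjoint (S i) v ∈ K₁)
    (hinv₂ : ∀ i, ∀ w ∈ K₂, ContinuousLinearMap.adjoint (S i) w ∈ K₂) :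
    ∀ x ∈ Submodule.span ℂ
        {x : H | ∃ (ω : List (Fin N)) (v : H), v ∈ K₁ ∧ x = ω.foldr (fun i w => S i w) v},
      ∀ y ∈ Submodule.span ℂ
        {y : H | ∃ (ω : List (Fin N)) (w : H), w ∈ K₂ ∧ y = ω.foldr (fun i u => S i u) w},
      (inner ℂ x y : ℂ) = 0 := by
  rw [← Submodule.isOrtho_iff_inner_eq, Submodule.isOrtho_span]
  rintro _ ⟨ω, v, hv, rfl⟩ _ ⟨τ, w, hw, rfl⟩
  exact inner_foldr_foldr_eq_zero S horth hperp hinv₁ hinv₂ ω τ hv hw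

/-- Let `K₁, K₂` be mutually orthogonal closed subspaces of `H`, each invariant under the
`Sᵢ*` for a Cuntz family `(Sᵢ)`. Then the spans `H(K₁) = span{S_ω v : v ∈ K₁}` and
`H(K₂) = span{S_ω w : w ∈ K₂}` are orthogonal. -/
theorem stmt12 {H : Type*} [NormedAddCommGroup H] [InnerProductSpace ℂ H] [CompleteSpace H]
    {N : ℕ} (S : Fin N → H →L[ℂ] H)
    (horth : ∀ i j, (ContinuousLinearMap.adjoint (S j)).comp (S i) =
      if i = j then 1 else 0)
    (hsum : ∑ i, (S i).comp (ContinuousLinearMap.adjoint (S i)) = 1)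
    (K₁ K₂ : Submodule ℂ H) (hc₁ : IsClosed (K₁ : Set H)) (hc₂ : IsClosed (K₂ : Set H))
    (hperp : ∀ v ∈ K₁, ∀ w ∈ K₂, (inner ℂ v w : ℂ) = 0)
    (hinv₁ : ∀ i, ∀ v ∈ K₁, ContinuousLinearMap.adjoint (S i) v ∈ K₁)
    (hinv₂ : ∀ i, ∀ w ∈ K₂, ContinuousLinearMap.adjoint (S i) w ∈ K₂) :
    ∀ x ∈ Submodule.span ℂ
        {x : H | ∃ (ω : List (Fin N)) (v : H), v ∈ K₁ ∧ x = ω.foldr (fun i w => S i w) v},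
      ∀ y ∈ Submodule.span ℂ
        {y : H | ∃ (ω : List (Fin N)) (w : H), w ∈ K₂ ∧ y = ω.foldr (fun i u => S i u) w},
      (inner ℂ x y : ℂ) = 0 :=
  stmt12_general S horth K₁ K₂ hperp hinv₁ hinv₂
end

section
/- With Rf(t) = Σ_i |ν_i(t)|² f(g_i(t)) as above, every continuous fixed point h of R is constant on every minimal compact invariant set M. -/
/-!
If `f` is a real continuous fixed point of `R`, take a point of `M` where `f` attains its
maximum `m` over `M`. At a point of `M ∩ {f = m}` the value `m` is a convex combination of
values `f (gᵢ t) ≤ m`, so every `gᵢ t` with `νᵢ t ≠ 0` lies again in `{f = m}`. Thus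
`M ∩ {f = m}` is a nonempty compact invariant subset of `M`, and minimality forces it to be `M`.
A complex fixed point is handled through its real and imaginary parts.
-/

open Finset

theorem Finset.eq_of_sum_mul_eq_of_le {ι : Type*} {s : Finset ι} {w a : ι → ℝ} {m : ℝ}
    (hw : ∀ i ∈ s, 0 ≤ w i) (hw_sum : ∑ i ∈ s, w i = 1) (ha : ∀ i ∈ s, w i ≠ 0 → a i ≤ m)
    (hwa : ∑ i ∈ s, w i * a i = m) {i : ι} (hi : i ∈ s) (hwi : w i ≠ 0) : a i = m := by
  have hgap_sum : ∑ j ∈ s, w j * (m - a j) = 0 := by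
    simp only [mul_sub, sum_sub_distrib, ← sum_mul, hw_sum, hwa, one_mul, sub_self]
  have hgap_nonneg : ∀ j ∈ s, 0 ≤ w j * (m - a j) := by
    intro j hj
    rcases eq_or_ne (w j) 0 with hwj | hwj
    · simp [hwj]
    · exact mul_nonneg (hw j hj) (sub_nonneg.mpr (ha j hj hwj))
  have hgap : w i * (m - a i) = 0 := (sum_eq_zero_iff_of_nonneg hgap_nonneg).mp hgap_sum i hi
  linarith [(mul_eq_zero.mp hgap).resolve_left hwi]

section MinimalCompactInvariant

variable {ι T : Type*} {g : ι → T → T} {ν : ι → T → ℂ} {M : Set T}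

theorem MinimalCompactInvariant.subset_of_isClosed [TopologicalSpace T]
    (hM : MinimalCompactInvariant g ν M)
    {S : Set T} (hS : IsClosed S) (hne : (M ∩ S).Nonempty) (hinv : InvariantSet g ν (M ∩ S)) :
    M ⊆ S :=
  Set.inter_eq_left.mp (hM.2.2.2 _ Set.inter_subset_left hne (hM.2.1.inter_right hS) hinv)

theorem InvariantSet.inter_preimage_of_isMaxOn [Fintype ι] (hinv : InvariantSet g ν M)
    (hsum : ∀ t, ∑ i, ‖ν i t‖ ^ 2 = 1) {f : T → ℝ}
    (hfix : ∀ t, ∑ i, ‖ν i t‖ ^ 2 * f (g i t) = f t) {t₀ : T} (hmax : IsMaxOn f M t₀) :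
    InvariantSet g ν (M ∩ f ⁻¹' {f t₀}) := by
  rintro t ⟨htM, hft : f t = f t₀⟩ i hνi
  refine ⟨hinv t htM i hνi, ?_⟩
  refine Finset.eq_of_sum_mul_eq_of_le (fun j _ ↦ sq_nonneg _) (hsum t)
    (fun j _ hνj ↦ hmax (hinv t htM j (by simpa using hνj))) ((hfix t).trans hft)
    (mem_univ i) (by simpa using hνi)

theorem MinimalCompactInvariant.eq_of_real_fixed [Fintype ι] [TopologicalSpace T]
    (hM : MinimalCompactInvariant g ν M)
    (hsum : ∀ t, ∑ i, ‖ν i t‖ ^ 2 = 1) {f : T → ℝ} (hf : Continuous f)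
    (hfix : ∀ t, ∑ i, ‖ν i t‖ ^ 2 * f (g i t) = f t) :
    ∀ x ∈ M, ∀ y ∈ M, f x = f y := by
  obtain ⟨t₀, ht₀, hmax⟩ := hM.2.1.exists_isMaxOn hM.1 hf.continuousOn
  have hlevel : M ⊆ f ⁻¹' {f t₀} :=
    hM.subset_of_isClosed (isClosed_singleton.preimage hf) ⟨t₀, ht₀, rfl⟩
      (hM.2.2.1.inter_preimage_of_isMaxOn hsum hfix hmax)
  intro x hx y hy
  exact (hlevel hx).trans (hlevel hy).symm

theorem MinimalCompactInvariant.eq_of_fixed [Fintype ι] [TopologicalSpace T]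
    (hM : MinimalCompactInvariant g ν M)
    (hsum : ∀ t, ∑ i, ‖ν i t‖ ^ 2 = 1) {h : T → ℂ} (hh : Continuous h)
    (hfix : ∀ t, ∑ i, (‖ν i t‖ ^ 2 : ℂ) * h (g i t) = h t) :
    ∀ x ∈ M, ∀ y ∈ M, h x = h y := by
  have hfix_comp (L : ℂ →L[ℝ] ℝ) (t : T) : ∑ i, ‖ν i t‖ ^ 2 * L (h (g i t)) = L (h t) := by
    simp only [← hfix t, map_sum, ← Complex.ofReal_pow, ← Complex.real_smul, map_smul,
      smul_eq_mul]
  intro x hx y hy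
  exact Complex.ext
    (hM.eq_of_real_fixed hsum (Complex.reCLM.continuous.comp hh) (hfix_comp _) x hx y hy)
    (hM.eq_of_real_fixed hsum (Complex.imCLM.continuous.comp hh) (hfix_comp _) x hx y hy)

end MinimalCompactInvariant

theorem stmt14_general {T : Type*} [MetricSpace T] {N : ℕ}
    (g : Fin N → T → T)
    (ν : Fin N → T → ℂ)
    (hsum : ∀ t, ∑ i, ‖ν i t‖ ^ 2 = 1)
    (h : T → ℂ) (hcont : Continuous h)
    (hfix : ∀ t, ∑ i, (‖ν i t‖ ^ 2 : ℂ) * h (g i t) = h t)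
    (M : Set T) (hM : MinimalCompactInvariant g ν M) :
    ∀ x ∈ M, ∀ y ∈ M, h x = h y :=
  hM.eq_of_fixed hsum hcont hfix

/-- With the Ruelle operator `Rf(t) = ∑ᵢ |νᵢ(t)|² f(gᵢ(t))`, every continuous fixed point
`h` of `R` is constant on every minimal compact invariant set `M`. -/
theorem stmt14 {T : Type*} [MetricSpace T] [CompleteSpace T] {N : ℕ}
    (g : Fin N → T → T) (c : NNReal) (hc : c < 1) (hg : ∀ i, LipschitzWith c (g i))
    (ν : Fin N → T → ℂ) (hν : ∀ i, Continuous (ν i))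
    (hsum : ∀ t, ∑ i, ‖ν i t‖ ^ 2 = 1)
    (h : T → ℂ) (hcont : Continuous h)
    (hfix : ∀ t, ∑ i, (‖ν i t‖ ^ 2 : ℂ) * h (g i t) = h t)
    (M : Set T) (hM : MinimalCompactInvariant g ν M) :
    ∀ x ∈ M, ∀ y ∈ M, h x = h y :=
  stmt14_general g ν hsum h hcont hfix M hM
end

section
/- Suppose the maps g_i are one-to-one, the weights satisfy V_i* e_t = ν_i(t) e_{g_i(t)}, and Σ_i V_i V_i* = I. Let M be a minimal finite invariant set. Then for any t₁ ≠ t₂ in M, ⟨e_{t₁}, e_{t₂}⟩ = 0. -/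
/-!
Expanding `⟨e_{t₁}, e_{t₂}⟩` through `∑ᵢ Vᵢ Vᵢ* = I` writes it as a combination of the
`⟨e_{gᵢ t₁}, e_{gᵢ t₂}⟩` over the transitions `i` possible from both points. So if the inner
product of some pair of distinct points of `M` were nonzero, invariance and injectivity would
give another such pair in `M`, closer by the factor `c < 1`; a pair of minimal distance among
the finitely many such pairs rules this out.
-/

open ContinuousLinearMap ComplexConjugate

section Coisometry

variable {ι T K : Type*} [Fintype ι] [NormedAddCommGroup K] [InnerProductSpace ℂ K]
  [CompleteSpace K] {g : ι → T → T} {ν : ι → T → ℂ} {e : T → K} {V : ι → K →L[ℂ] K}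

theorem inner_eq_sum_inner_of_sum_comp_adjoint_eq_one
    (hco : ∑ i, (V i).comp (adjoint (V i)) = 1)
    (hwalk : ∀ i t, adjoint (V i) (e t) = ν i t • e (g i t)) (s₁ s₂ : T) :
    inner ℂ (e s₁) (e s₂) =
      ∑ i, conj (ν i s₁) * ν i s₂ * inner ℂ (e (g i s₁)) (e (g i s₂)) := by
  calc inner ℂ (e s₁) (e s₂)
      = inner ℂ (e s₁) ((∑ i, (V i).comp (adjoint (V i))) (e s₂)) := by rw [hco]; rfl
    _ = ∑ i, inner ℂ (adjoint (V i) (e s₁)) (adjoint (V i) (e s₂)) := by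
        simp only [sum_apply, inner_sum, comp_apply, ← adjoint_inner_left]
    _ = _ := by
        refine Finset.sum_congr rfl fun i _ => ?_
        rw [hwalk, hwalk, inner_smul_left, inner_smul_right, mul_assoc]

theorem exists_transition_inner_ne_zero
    (hco : ∑ i, (V i).comp (adjoint (V i)) = 1)
    (hwalk : ∀ i t, adjoint (V i) (e t) = ν i t • e (g i t)) {s₁ s₂ : T}
    (h : inner ℂ (e s₁) (e s₂) ≠ 0) :
    ∃ i, ν i s₁ ≠ 0 ∧ ν i s₂ ≠ 0 ∧ inner ℂ (e (g i s₁)) (e (g i s₂)) ≠ 0 := by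
  rw [inner_eq_sum_inner_of_sum_comp_adjoint_eq_one hco hwalk] at h
  obtain ⟨i, -, hi⟩ := Finset.exists_ne_zero_of_sum_ne_zero h
  simp only [ne_eq, mul_eq_zero, map_eq_zero, not_or] at hi
  exact ⟨i, hi.1.1, hi.1.2, hi.2⟩

end Coisometry

theorem stmt15_general {T K : Type*} [MetricSpace T]
    [NormedAddCommGroup K] [InnerProductSpace ℂ K] [CompleteSpace K] {N : ℕ}
    (g : Fin N → T → T) (c : NNReal) (hc : c < 1) (hg : ∀ i, LipschitzWith c (g i))
    (hinj : ∀ i, Function.Injective (g i))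
    (ν : Fin N → T → ℂ) (e : T → K)
    (V : Fin N → K →L[ℂ] K)
    (hco : ∑ i, (V i).comp (ContinuousLinearMap.adjoint (V i)) = 1)
    (hwalk : ∀ i t, ContinuousLinearMap.adjoint (V i) (e t) = ν i t • e (g i t))
    (M : Set T) (hMfin : M.Finite) (hMinv : InvariantSet g ν M)
    (t₁ : T) (ht₁ : t₁ ∈ M) (t₂ : T) (ht₂ : t₂ ∈ M) (hne : t₁ ≠ t₂) :
    (inner ℂ (e t₁) (e t₂) : ℂ) = 0 := by
  by_contra h
  set S : Set (T × T) := {p | p.1 ∈ M ∧ p.2 ∈ M ∧ p.1 ≠ p.2 ∧ inner ℂ (e p.1) (e p.2) ≠ 0}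
  have hSfin : S.Finite := (hMfin.prod hMfin).subset fun p hp => ⟨hp.1, hp.2.1⟩
  obtain ⟨⟨s₁, s₂⟩, ⟨hs₁, hs₂, hs, hinner⟩, hmin⟩ :=
    S.exists_min_image (fun p => dist p.1 p.2) hSfin ⟨(t₁, t₂), ht₁, ht₂, hne, h⟩
  obtain ⟨i, hν₁, hν₂, hi⟩ := exists_transition_inner_ne_zero hco hwalk hinner
  have hmem : (g i s₁, g i s₂) ∈ S :=
    ⟨hMinv s₁ hs₁ i hν₁, hMinv s₂ hs₂ i hν₂, (hinj i).ne hs, hi⟩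
  have hcloser : dist (g i s₁) (g i s₂) < dist s₁ s₂ :=
    ((hg i).dist_le_mul s₁ s₂).trans_lt
      (mul_lt_of_lt_one_left (dist_pos.2 hs) (by exact_mod_cast hc))
  exact (hmin _ hmem).not_gt hcloser

/-- Suppose the maps `gᵢ` are one-to-one contractions, `Vᵢ* e_t = νᵢ(t) • e_{gᵢ(t)}`,
and `∑ᵢ Vᵢ Vᵢ* = I`. Let `M` be a minimal finite invariant set. Then for `t₁ ≠ t₂` in
`M`, `⟨e_{t₁}, e_{t₂}⟩ = 0`. -/
theorem stmt15 {T K : Type*} [MetricSpace T]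
    [NormedAddCommGroup K] [InnerProductSpace ℂ K] [CompleteSpace K] {N : ℕ}
    (g : Fin N → T → T) (c : NNReal) (hc : c < 1) (hg : ∀ i, LipschitzWith c (g i))
    (hinj : ∀ i, Function.Injective (g i))
    (ν : Fin N → T → ℂ) (e : T → K) (heunit : ∀ t, ‖e t‖ = 1)
    (V : Fin N → K →L[ℂ] K)
    (hco : ∑ i, (V i).comp (ContinuousLinearMap.adjoint (V i)) = 1)
    (hwalk : ∀ i t, ContinuousLinearMap.adjoint (V i) (e t) = ν i t • e (g i t))
    (M : Set T) (hMfin : M.Finite) (hMinv : InvariantSet g ν M)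
    (hMmin : ∀ M' ⊆ M, M'.Nonempty → InvariantSet g ν M' → M' = M)
    (t₁ : T) (ht₁ : t₁ ∈ M) (t₂ : T) (ht₂ : t₂ ∈ M) (hne : t₁ ≠ t₂) :
    (inner ℂ (e t₁) (e t₂) : ℂ) = 0 :=
  stmt15_general g c hc hg hinj ν e V hco hwalk M hMfin hMinv t₁ ht₁ t₂ ht₂ hne
end

section
/- Let R = 4, B = {0,2}, so m_B(x) = (1 + e^{4πix})/2, and consider the maps g_i(t) = (t - l_i)/4 with L = {l₀ = 0, l₁ = 3, l₂ = 4, l₃ = 15} and weights ν_i(t) proportional to m_B(g_i(t)) (with α₂ = 0, α_i ≠ 0 for i ≠ 2). Then {0} and {-1, -4} are the only minimal invariant subsets of the real line consisting of points c with 2c ∈ ℤ; in particular {-1,-4} is invariant: the transitions -1 → g₁(-1) = -1, -1 → g₃(-1) = -4, and -4 → g₀(-4) = -1 are all possible. -/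
/-- `m_B(x) = (1 + e^{2πi·2x})/2`, the mask of the digit set `B = {0,2}` with `R = 4`. -/
noncomputable def mB (x : ℝ) : ℂ :=
  (1 + Complex.exp (2 * Real.pi * Complex.I * ((2 * x : ℝ) : ℂ))) / 2

/-- The points `L = {0, 3, 4, 15}`. -/
noncomputable def lvec : Fin 4 → ℝ := ![0, 3, 4, 15]

/-- The maps `gᵢ(t) = (t - lᵢ)/4`. -/
noncomputable def gmap (i : Fin 4) (t : ℝ) : ℝ := (t - lvec i) / 4

/-- The weights `νᵢ(c) = conj(αᵢ) m_B((c - lᵢ)/4)`. -/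
noncomputable def nu (α : Fin 4 → ℂ) (i : Fin 4) (c : ℝ) : ℂ :=
  starRingEnd ℂ (α i) * mB ((c - lvec i) / 4)

/-- A set `M ⊆ ℝ` is invariant: possible transitions (`νᵢ(c) ≠ 0`) from `M` stay in `M`. -/
def InvSet (α : Fin 4 → ℂ) (M : Set ℝ) : Prop :=
  ∀ c ∈ M, ∀ i : Fin 4, nu α i c ≠ 0 → gmap i c ∈ M

/-- A minimal (compact) invariant set. -/
def MinInv (α : Fin 4 → ℂ) (M : Set ℝ) : Prop :=
  M.Nonempty ∧ IsCompact M ∧ InvSet α M ∧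
    ∀ M' ⊆ M, M'.Nonempty → IsCompact M' → InvSet α M' → M' = M

/-!
`m_B(x)` vanishes exactly when `4x` is an odd integer, so from an integer `c` the possible
transitions are `g₀` when `c` is even and `g₁, g₃` when `c` is odd (`α₂ = 0` kills `g₂`). An
invariant set of half-integers contains only integers, since `g₀` would send a proper
half-integer `c` to `c/4 ∉ (1/2)ℤ`. On integers, `g₀` (even) or `g₁` (odd) strictly decreases
`|c|` until it reaches `0` or `-1`, so every such invariant set contains `{0}` or the cycle
`{-1, -4}`, both of which are invariant; minimality finishes the proof.
-/

lemma mB_eq_zero_iff (x : ℝ) : mB x = 0 ↔ ∃ k : ℤ, 4 * x = 2 * k + 1 := by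
  have hπI : (Real.pi : ℂ) * Complex.I ≠ 0 :=
    mul_ne_zero (Complex.ofReal_ne_zero.2 Real.pi_ne_zero) Complex.I_ne_zero
  rw [mB, div_eq_zero_iff, or_iff_left two_ne_zero, add_comm, add_eq_zero_iff_eq_neg,
    ← Complex.exp_pi_mul_I, Complex.exp_eq_exp_iff_exists_int]
  refine exists_congr fun k => ?_
  have key : 2 * Real.pi * Complex.I * ((2 * x : ℝ) : ℂ) -
      (Real.pi * Complex.I + k * (2 * Real.pi * Complex.I)) =
      ((4 * x - (2 * k + 1) : ℝ) : ℂ) * (Real.pi * Complex.I) := by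
    push_cast; ring
  rw [← sub_eq_zero, key, mul_eq_zero, or_iff_left hπI, Complex.ofReal_eq_zero, sub_eq_zero]

lemma nu_eq_zero_iff (α : Fin 4 → ℂ) (i : Fin 4) (c : ℝ) :
    nu α i c = 0 ↔ α i = 0 ∨ ∃ k : ℤ, c - lvec i = 2 * k + 1 := by
  rw [nu, mul_eq_zero, map_eq_zero, mB_eq_zero_iff, mul_div_cancel₀ _ four_ne_zero]

lemma exists_intCast_eq_two_mul_add_one_iff (z : ℤ) :
    (∃ k : ℤ, (z : ℝ) = 2 * k + 1) ↔ Odd z :=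
  exists_congr fun _ => by exact_mod_cast Iff.rfl

def lInt : Fin 4 → ℤ := ![0, 3, 4, 15]

lemma lvec_eq_lInt (i : Fin 4) : lvec i = lInt i := by
  fin_cases i <;> simp [lvec, lInt]

@[simp] lemma lvec_zero : lvec 0 = 0 := rfl
@[simp] lemma lvec_one : lvec 1 = 3 := rfl
@[simp] lemma lvec_three : lvec 3 = 15 := rfl

lemma nu_intCast_eq_zero_iff (α : Fin 4 → ℂ) (i : Fin 4) (z : ℤ) :
    nu α i z = 0 ↔ α i = 0 ∨ Odd (z - lInt i) := by
  rw [nu_eq_zero_iff, lvec_eq_lInt, ← exists_intCast_eq_two_mul_add_one_iff, Int.cast_sub]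

lemma nu_intCast_ne_zero {α : Fin 4 → ℂ} {i : Fin 4} {z : ℤ} (hα : α i ≠ 0)
    (hz : Even (z - lInt i)) : nu α i z ≠ 0 := by
  rw [Ne, nu_intCast_eq_zero_iff, not_or, Int.not_odd_iff_even]
  exact ⟨hα, hz⟩

lemma parity_of_nu_intCast_ne_zero {α : Fin 4 → ℂ} (h2 : α 2 = 0) {i : Fin 4} {z : ℤ}
    (h : nu α i z ≠ 0) : (Even z ∧ i = 0) ∨ (Odd z ∧ (i = 1 ∨ i = 3)) := by
  rw [Ne, nu_intCast_eq_zero_iff, not_or, Int.not_odd_iff_even] at h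
  fin_cases i <;> simp_all [lInt, Int.even_iff, Int.odd_iff] <;> omega

lemma invSet_singleton_zero {α : Fin 4 → ℂ} (h2 : α 2 = 0) : InvSet α {0} := by
  rintro c rfl i hν
  rw [← Int.cast_zero] at hν
  obtain ⟨-, rfl⟩ | ⟨hodd, -⟩ := parity_of_nu_intCast_ne_zero h2 hν
  · norm_num [gmap]
  · exact absurd hodd (by decide)

lemma invSet_pair {α : Fin 4 → ℂ} (h2 : α 2 = 0) : InvSet α {-1, -4} := by
  rintro c (rfl | rfl) i hν
  · have hν' : nu α i ((-1 : ℤ) : ℝ) ≠ 0 := by exact_mod_cast hν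
    obtain ⟨heven, -⟩ | ⟨-, rfl | rfl⟩ := parity_of_nu_intCast_ne_zero h2 hν'
    · exact absurd heven (by decide)
    all_goals norm_num [gmap]
  · have hν' : nu α i ((-4 : ℤ) : ℝ) ≠ 0 := by exact_mod_cast hν
    obtain ⟨-, rfl⟩ | ⟨hodd, -⟩ := parity_of_nu_intCast_ne_zero h2 hν'
    · norm_num [gmap]
    · exact absurd hodd (by decide)

namespace InvSet

variable {α : Fin 4 → ℂ} {M : Set ℝ}

lemma exists_intCast_eq (h0 : α 0 ≠ 0) (hM : InvSet α M)
    (hhalf : ∀ c ∈ M, ∃ z : ℤ, 2 * c = z) {c : ℝ} (hc : c ∈ M) : ∃ z : ℤ, c = z := by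
  obtain ⟨z, hz⟩ := hhalf c hc
  obtain ⟨m, rfl | rfl⟩ := Int.even_or_odd' z
  · exact ⟨m, by push_cast at hz; linarith⟩
  exfalso
  have hν : nu α 0 c ≠ 0 := by
    rw [Ne, nu_eq_zero_iff, not_or]
    refine ⟨h0, fun ⟨k, hk⟩ => ?_⟩
    rw [lvec_zero, sub_zero] at hk
    have : ((2 * m + 1 : ℤ) : ℝ) = ((4 * k + 2 : ℤ) : ℝ) := by push_cast at hz ⊢; linarith
    have := Int.cast_injective this
    omega
  obtain ⟨w, hw⟩ := hhalf _ (hM c hc 0 hν)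
  rw [gmap, lvec_zero, sub_zero] at hw
  have : ((2 * m + 1 : ℤ) : ℝ) = ((4 * w : ℤ) : ℝ) := by push_cast at hz ⊢; linarith
  have := Int.cast_injective this
  omega

lemma exists_intCast_mem_gmap (hM : InvSet α M) (hint : ∀ c ∈ M, ∃ z : ℤ, c = z)
    {i : Fin 4} {z : ℤ} (hz : (z : ℝ) ∈ M) (hν : nu α i z ≠ 0) :
    ∃ d : ℤ, (d : ℝ) ∈ M ∧ z = 4 * d + lInt i := by
  have hmem := hM _ hz i hν
  obtain ⟨d, hd⟩ := hint _ hmem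
  refine ⟨d, hd ▸ hmem, ?_⟩
  rw [gmap, lvec_eq_lInt] at hd
  exact_mod_cast (by linarith : (z : ℝ) = 4 * d + lInt i)

lemma zero_mem_or_neg_one_mem (h0 : α 0 ≠ 0) (h1 : α 1 ≠ 0) (hM : InvSet α M)
    (hint : ∀ c ∈ M, ∃ z : ℤ, c = z) (z : ℤ) (hz : (z : ℝ) ∈ M) :
    (0 : ℝ) ∈ M ∨ (-1 : ℝ) ∈ M := by
  obtain ⟨d, hd, hzd⟩ : ∃ d : ℤ, (d : ℝ) ∈ M ∧ (z = 4 * d ∨ z = 4 * d + 3) := by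
    rcases Int.even_or_odd z with heven | hodd
    · obtain ⟨d, hd, hzd⟩ := hM.exists_intCast_mem_gmap hint hz
        (nu_intCast_ne_zero (i := 0) h0 (by simpa [lInt] using heven))
      exact ⟨d, hd, Or.inl (by simpa [lInt] using hzd)⟩
    · obtain ⟨d, hd, hzd⟩ := hM.exists_intCast_mem_gmap hint hz
        (nu_intCast_ne_zero (i := 1) h1 (by simp [lInt, Int.even_sub', hodd]; decide))
      exact ⟨d, hd, Or.inr (by simpa [lInt] using hzd)⟩
  by_cases hstop : d = 0 ∨ d = -1
  · rcases hstop with rfl | rfl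
    · exact Or.inl (by exact_mod_cast hd)
    · exact Or.inr (by exact_mod_cast hd)
  have : d.natAbs < z.natAbs := by omega
  exact zero_mem_or_neg_one_mem h0 h1 hM hint d hd
termination_by z.natAbs

end InvSet

lemma MinInv.eq_of_finite_subset {α : Fin 4 → ℂ} {M M' : Set ℝ} (hM : MinInv α M)
    (hsub : M' ⊆ M) (hne : M'.Nonempty) (hfin : M'.Finite) (hinv : InvSet α M') : M = M' :=
  (hM.2.2.2 M' hsub hne hfin.isCompact hinv).symm

/-- With `R = 4`, `B = {0,2}`, `L = {0,3,4,15}`, weights `νᵢ(c) = conj(αᵢ) m_B((c-lᵢ)/4)`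
where `α₂ = 0` and `αᵢ ≠ 0` for `i ≠ 2`: the transitions `-1 → g₁(-1) = -1`,
`-1 → g₃(-1) = -4` and `-4 → g₀(-4) = -1` are all possible, `{0}` and `{-1,-4}` are
invariant, and they are the only minimal invariant subsets of `ℝ` consisting of points
`c` with `2c ∈ ℤ`. -/
theorem stmt19 (α : Fin 4 → ℂ) (h0 : α 0 ≠ 0) (h1 : α 1 ≠ 0) (h3 : α 3 ≠ 0)
    (h2 : α 2 = 0) :
    (nu α 1 (-1) ≠ 0 ∧ gmap 1 (-1) = -1 ∧
      nu α 3 (-1) ≠ 0 ∧ gmap 3 (-1) = -4 ∧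
      nu α 0 (-4) ≠ 0 ∧ gmap 0 (-4) = -1) ∧
    InvSet α {0} ∧ InvSet α ({-1, -4} : Set ℝ) ∧
    ∀ M : Set ℝ, (∀ c ∈ M, ∃ z : ℤ, 2 * c = (z : ℝ)) → MinInv α M →
      M = {0} ∨ M = ({-1, -4} : Set ℝ) := by
  have hν₁ : nu α 1 (-1) ≠ 0 := by exact_mod_cast nu_intCast_ne_zero (z := -1) h1 (by decide)
  have hν₃ : nu α 3 (-1) ≠ 0 := by exact_mod_cast nu_intCast_ne_zero (z := -1) h3 (by decide)
  have hν₀ : nu α 0 (-4) ≠ 0 := by exact_mod_cast nu_intCast_ne_zero (z := -4) h0 (by decide)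
  have hg₃ : gmap 3 (-1) = -4 := by norm_num [gmap]
  refine ⟨⟨hν₁, by norm_num [gmap], hν₃, hg₃, hν₀, by norm_num [gmap]⟩,
    invSet_singleton_zero h2, invSet_pair h2, fun M hhalf hM => ?_⟩
  have hinv : InvSet α M := hM.2.2.1
  have hint := fun c (hc : c ∈ M) => hinv.exists_intCast_eq h0 hhalf hc
  obtain ⟨c, hc⟩ := hM.1
  obtain ⟨z, rfl⟩ := hint c hc
  rcases hinv.zero_mem_or_neg_one_mem h0 h1 hint z hc with h | h
  · exact Or.inl (hM.eq_of_finite_subset (by simpa using h) (Set.singleton_nonempty _)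
      (Set.finite_singleton _) (invSet_singleton_zero h2))
  · have h4 : (-4 : ℝ) ∈ M := hg₃ ▸ hinv _ h 3 hν₃
    exact Or.inr (hM.eq_of_finite_subset (Set.insert_subset h (by simpa using h4))
      (Set.insert_nonempty _ _) (Set.toFinite _) (invSet_pair h2))
end
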